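/- arXiv:1504.04733 — 3 statements merged into one kernel-verified Lean document; each statement's English description precedes it below -/
import Mathlib

section
/- In the Lie algebra L(g, Γ) presented by generators a_i^s, b_i^s with relations (21)-(26) of the paper (in particular: C_{ij} := [a_i^s, b_j^s] = [a_j^t, b_t^i] for all s,t; [a_i^s, b_j^t] = 0 for s ≠ t; [a_i^s, a_j^t] = [b_i^s, b_j^t] = 0 for i ≠ j; Σ_j C_{ij} = Σ_s [b_i^s, a_i^s]; [a_k^s, C_{ij}] = [b_k^s, C_{ij}] = 0 for k ≠ i,j), the relation [a_i^s + a_j^s, C_{ij}] = 0 holds for all i ≠ j and all s. -/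
/-!
Expand `C i j = ⁅a j s, b i s⁆` by the Jacobi identity: since `a i s` and `a j s` commute,
`⁅a i s, C i j⁆ = -⁅a j s, ⁅b i s, a i s⁆⁆`. Now bracket both sides of relation (25) for `i`
with `a j s`. On its right-hand side only the `s`-th summand survives, by (23) and (24); on its
left-hand side only `C i j` survives, by (26). Hence `⁅a j s, ⁅b i s, a i s⁆⁆ = ⁅a j s, C i j⁆`.
-/

section LieRing

variable {L : Type*} [LieRing L]

lemma lie_lie_comm_of_lie_eq_zero {x y : L} (h : ⁅x, y⁆ = 0) (z : L) :
    ⁅x, ⁅y, z⁆⁆ = ⁅y, ⁅x, z⁆⁆ := by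
  rw [leibniz_lie, h, zero_lie, zero_add]

lemma lie_lie_eq_zero_of_lie_eq_zero {x y z : L} (hy : ⁅x, y⁆ = 0) (hz : ⁅x, z⁆ = 0) :
    ⁅x, ⁅y, z⁆⁆ = 0 := by
  rw [leibniz_lie, hy, hz, zero_lie, lie_zero, add_zero]

end LieRing

theorem stmt_7_general {V : Type*} [Fintype V] [DecidableEq V] {L : Type*}
    [LieRing L]
    (g : ℕ)
    (a b : V → Fin g → L) (C : V → V → L)
    (h21 : ∀ i j, i ≠ j → ∀ s : Fin g, C i j = ⁅a i s, b j s⁆ ∧ C i j = ⁅a j s, b i s⁆)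
    (h23 : ∀ i j, i ≠ j → ∀ s t : Fin g, s ≠ t → ⁅a i s, b j t⁆ = 0)
    (h24 : ∀ i j, i ≠ j → ∀ s t : Fin g, ⁅a i s, a j t⁆ = 0 ∧ ⁅b i s, b j t⁆ = 0)
    (h25 : ∀ i, ∑ j ∈ Finset.univ.erase i, C i j = ∑ s : Fin g, ⁅b i s, a i s⁆)
    (h26 : ∀ i j k, i ≠ j → k ≠ i → k ≠ j → ∀ s : Fin g,
      ⁅a k s, C i j⁆ = 0 ∧ ⁅b k s, C i j⁆ = 0)
    (i j : V) (hij : i ≠ j) (s : Fin g) :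
    ⁅a i s + a j s, C i j⁆ = 0 := by
  have hi : ⁅a i s, C i j⁆ = -⁅a j s, ⁅b i s, a i s⁆⁆ := by
    rw [(h21 i j hij s).2, lie_lie_comm_of_lie_eq_zero (h24 i j hij s s).1,
      ← lie_skew (b i s), lie_neg, neg_neg]
  have hC : ⁅a j s, ∑ k ∈ Finset.univ.erase i, C i k⁆ = ⁅a j s, C i j⁆ := by
    rw [lie_sum, Finset.sum_eq_single_of_mem j (by simpa using hij.symm)]
    intro k hk hkj
    exact (h26 i k j (Finset.ne_of_mem_erase hk).symm hij.symm (Ne.symm hkj) s).1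
  have hba : ⁅a j s, ∑ t : Fin g, ⁅b i t, a i t⁆⁆ = ⁅a j s, ⁅b i s, a i s⁆⁆ := by
    rw [lie_sum, Finset.sum_eq_single_of_mem s (Finset.mem_univ s)]
    intro t _ hts
    exact lie_lie_eq_zero_of_lie_eq_zero (h23 j i hij.symm s t (Ne.symm hts))
      (h24 j i hij.symm s t).1
  rw [add_lie, hi, ← hba, ← h25 i, hC, neg_add_cancel]

/-- In the Lie algebra L(g,Γ) presented by generators a_i^s, b_i^s and relations
(21)-(26) of Berceanu–Măcinic–Papadima–Popescu, the relation [a_i^s + a_j^s, C_{ij}] = 0 holds for all i ≠ j and all s. -/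
theorem stmt_7 {V : Type*} [Fintype V] [DecidableEq V] {L : Type*}
    [LieRing L] [LieAlgebra ℚ L]
    (E : V → V → Prop) (g : ℕ) (hg : 1 ≤ g)
    (a b : V → Fin g → L) (C : V → V → L)
    (h21 : ∀ i j, i ≠ j → ∀ s : Fin g, C i j = ⁅a i s, b j s⁆ ∧ C i j = ⁅a j s, b i s⁆)
    (h22 : ∀ i j, ¬ E i j → C i j = 0)
    (h23 : ∀ i j, i ≠ j → ∀ s t : Fin g, s ≠ t → ⁅a i s, b j t⁆ = 0)
    (h24 : ∀ i j, i ≠ j → ∀ s t : Fin g, ⁅a i s, a j t⁆ = 0 ∧ ⁅b i s, b j t⁆ = 0)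
    (h25 : ∀ i, ∑ j ∈ Finset.univ.erase i, C i j = ∑ s : Fin g, ⁅b i s, a i s⁆)
    (h26 : ∀ i j k, i ≠ j → k ≠ i → k ≠ j → ∀ s : Fin g,
      ⁅a k s, C i j⁆ = 0 ∧ ⁅b k s, C i j⁆ = 0)
    (i j : V) (hij : i ≠ j) (s : Fin g) :
    ⁅a i s + a j s, C i j⁆ = 0 :=
  stmt_7_general g a b C h21 h23 h24 h25 h26 i j hij s
end

section
/- In the Lie algebra L(g, Γ) presented as in Proposition 3.3 (relations (21)-(26)), if ij, jk ∈ E but ik ∉ E (so C_{ik} = 0), then [C_{ij}, C_{jk}] = 0. -/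
private lemma lsum {L : Type*} [LieRing L] {α : Type*} (x : L) (T : Finset α)
    (f : α → L) : ⁅x, ∑ t ∈ T, f t⁆ = ∑ t ∈ T, ⁅x, f t⁆ := by
  induction T using Finset.cons_induction with
  | empty => simp
  | cons t T ht ih => simp [Finset.sum_cons, lie_add, ih]

/-- In the Lie algebra L(g,Γ) presented by generators a_i^s, b_i^s and relations
(21)-(26) of Berceanu–Măcinic–Papadima–Popescu, if ij, jk are edges but ik is not an edge (so C_{ik} = 0), then [C_{ij}, C_{jk}] = 0. -/
theorem stmt_8 {V : Type*} [Fintype V] [DecidableEq V] {L : Type*}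
    [LieRing L] [LieAlgebra ℚ L]
    (E : V → V → Prop) (g : ℕ) (hg : 1 ≤ g)
    (a b : V → Fin g → L) (C : V → V → L)
    (h21 : ∀ i j, i ≠ j → ∀ s : Fin g, C i j = ⁅a i s, b j s⁆ ∧ C i j = ⁅a j s, b i s⁆)
    (h22 : ∀ i j, ¬ E i j → C i j = 0)
    (h23 : ∀ i j, i ≠ j → ∀ s t : Fin g, s ≠ t → ⁅a i s, b j t⁆ = 0)
    (h24 : ∀ i j, i ≠ j → ∀ s t : Fin g, ⁅a i s, a j t⁆ = 0 ∧ ⁅b i s, b j t⁆ = 0)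
    (h25 : ∀ i, ∑ j ∈ Finset.univ.erase i, C i j = ∑ s : Fin g, ⁅b i s, a i s⁆)
    (h26 : ∀ i j k, i ≠ j → k ≠ i → k ≠ j → ∀ s : Fin g,
      ⁅a k s, C i j⁆ = 0 ∧ ⁅b k s, C i j⁆ = 0)
    (i j k : V) (hij : i ≠ j) (hjk : j ≠ k) (hik : i ≠ k)
    (hEij : E i j) (hEjk : E j k) (hEik : ¬ E i k) :
    ⁅C i j, C j k⁆ = 0 := by
  have s : Fin g := ⟨0, hg⟩
  -- Key lemma: ⁅a q s, C p q⁆ = -⁅a p s, C p q⁆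
  have key : ∀ p q : V, p ≠ q → ∀ s : Fin g, ⁅a q s, C p q⁆ = -⁅a p s, C p q⁆ := by
    intro p q hpq s
    have hq : q ∈ Finset.univ.erase p := by
      simp [Finset.mem_erase, hpq.symm]
    have step1 : ⁅a q s, C p q⁆ = ∑ l ∈ Finset.univ.erase p, ⁅a q s, C p l⁆ := by
      rw [Finset.sum_eq_single q]
      · intro l hl hlq
        have hpl : p ≠ l := (Finset.mem_erase.mp hl).1.symm
        exact (h26 p l q hpl hpq.symm (Ne.symm hlq) s).1
      · intro h; exact absurd hq h
    have step2 : ∑ l ∈ Finset.univ.erase p, ⁅a q s, C p l⁆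
        = ∑ s' : Fin g, ⁅a q s, ⁅b p s', a p s'⁆⁆ := by
      rw [show (∑ l ∈ Finset.univ.erase p, ⁅a q s, C p l⁆)
          = ⁅a q s, ∑ l ∈ Finset.univ.erase p, C p l⁆ from (lsum _ _ _).symm,
        h25 p, lsum]
    have step3 : ∀ s' : Fin g, ⁅a q s, ⁅b p s', a p s'⁆⁆
        = ⁅⁅a q s, b p s'⁆, a p s'⁆ := by
      intro s'
      rw [leibniz_lie, (h24 q p hpq.symm s s').1, lie_zero, add_zero]
    have step4 : ∑ s' : Fin g, ⁅a q s, ⁅b p s', a p s'⁆⁆ = ⁅C p q, a p s⁆ := by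
      rw [Finset.sum_eq_single s]
      · rw [step3 s, ← (h21 p q hpq s).2]
      · intro s' _ hs'
        rw [step3 s', h23 q p hpq.symm s s' (Ne.symm hs'), zero_lie]
      · intro h; exact absurd (Finset.mem_univ s) h
    rw [step1, step2, step4, ← lie_skew]
  -- Facts
  have hbiC : ⁅b i s, C j k⁆ = 0 := (h26 j k i hjk hij hik s).2
  have hajC : ⁅a j s, C j k⁆ = -⁅a k s, C j k⁆ := by
    rw [key j k hjk s, neg_neg]
  have hba : ⁅b i s, a k s⁆ = 0 := by
    have : C i k = ⁅a k s, b i s⁆ := (h21 i k hik s).2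
    rw [← lie_skew, this.symm.trans (h22 i k hEik), neg_zero]
  have hCij : C i j = ⁅a j s, b i s⁆ := (h21 i j hij s).2
  rw [hCij, lie_lie, hbiC, lie_zero, hajC, lie_neg, leibniz_lie, hba, zero_lie,
    hbiC, lie_zero]
  simp
end

section
/- In the Lie algebra L(g, Γ) presented as in Proposition 3.3 (relations (21)-(26)), if ij, jk, ik ∈ E then [C_{ij} + C_{jk}, C_{ik}] = 0. -/
private lemma lie_sum_aux {L : Type*} [LieRing L] {ι : Type*} (x : L) (t : Finset ι)
    (f : ι → L) : ⁅x, ∑ i ∈ t, f i⁆ = ∑ i ∈ t, ⁅x, f i⁆ :=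
  map_sum (AddMonoidHom.mk' (fun y => ⁅x, y⁆) (lie_add x)) f t


/-- In the Lie algebra L(g,Γ) presented by generators a_i^s, b_i^s and relations
(21)-(26) of Berceanu–Măcinic–Papadima–Popescu, if ij, jk, ik are all edges then [C_{ij} + C_{jk}, C_{ik}] = 0. -/
theorem stmt_9 {V : Type*} [Fintype V] [DecidableEq V] {L : Type*}
    [LieRing L] [LieAlgebra ℚ L]
    (E : V → V → Prop) (g : ℕ) (hg : 1 ≤ g)
    (a b : V → Fin g → L) (C : V → V → L)
    (h21 : ∀ i j, i ≠ j → ∀ s : Fin g, C i j = ⁅a i s, b j s⁆ ∧ C i j = ⁅a j s, b i s⁆)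
    (h22 : ∀ i j, ¬ E i j → C i j = 0)
    (h23 : ∀ i j, i ≠ j → ∀ s t : Fin g, s ≠ t → ⁅a i s, b j t⁆ = 0)
    (h24 : ∀ i j, i ≠ j → ∀ s t : Fin g, ⁅a i s, a j t⁆ = 0 ∧ ⁅b i s, b j t⁆ = 0)
    (h25 : ∀ i, ∑ j ∈ Finset.univ.erase i, C i j = ∑ s : Fin g, ⁅b i s, a i s⁆)
    (h26 : ∀ i j k, i ≠ j → k ≠ i → k ≠ j → ∀ s : Fin g,
      ⁅a k s, C i j⁆ = 0 ∧ ⁅b k s, C i j⁆ = 0)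
    (i j k : V) (hij : i ≠ j) (hjk : j ≠ k) (hik : i ≠ k)
    (hEij : E i j) (hEjk : E j k) (hEik : E i k) :
    ⁅C i j + C j k, C i k⁆ = 0 := by
  set s : Fin g := ⟨0, hg⟩ with hs
  -- C i j + C j k = ⁅a i s + a k s, b j s⁆
  have hsum : C i j + C j k = ⁅a i s + a k s, b j s⁆ := by
    rw [(h21 i j hij s).1, (h21 j k hjk s).2, add_lie]
  -- ⁅b j s, C i k⁆ = 0
  have hb : ⁅b j s, C i k⁆ = 0 := (h26 i k j hik hij.symm hjk s).2
  -- key: ⁅a k s, ⁅b i s, a i s⁆⁆ = ⁅a k s, C i k⁆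
  have key : ⁅a k s, ⁅b i s, a i s⁆⁆ = ⁅a k s, C i k⁆ := by
    have h25i := congrArg (fun x => ⁅a k s, x⁆) (h25 i)
    beta_reduce at h25i
    rw [lie_sum_aux, lie_sum_aux] at h25i
    rw [Finset.sum_eq_single k, Finset.sum_eq_single s] at h25i
    · exact h25i.symm
    · intro t _ hts
      have h1 : ⁅a k s, b i t⁆ = 0 := h23 k i hik.symm s t hts.symm
      have h2 : ⁅a k s, a i t⁆ = 0 := (h24 k i hik.symm s t).1
      rw [leibniz_lie, h1, h2, zero_lie, lie_zero, add_zero]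
    · intro h; exact absurd (Finset.mem_univ s) h
    · intro j' hj' hj'k
      have hij' : i ≠ j' := fun h => (Finset.mem_erase.mp hj').1 h.symm
      exact (h26 i j' k hij' hik.symm (Ne.symm hj'k) s).1
    · intro h
      exact absurd (Finset.mem_erase.mpr ⟨hik.symm, Finset.mem_univ k⟩) h
  -- ⁅a i s + a k s, C i k⁆ = 0
  have ha : ⁅a i s + a k s, C i k⁆ = 0 := by
    have hCik : C i k = ⁅a k s, b i s⁆ := (h21 i k hik s).2
    have haa : ⁅a i s, a k s⁆ = 0 := (h24 i k hik s s).1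
    have hX : ⁅a i s, C i k⁆ = ⁅a k s, ⁅a i s, b i s⁆⁆ := by
      rw [hCik, leibniz_lie, haa, zero_lie, zero_add]
    rw [add_lie, hX, ← key]
    rw [← lie_skew (b i s) (a i s), lie_neg, add_neg_cancel]
  rw [hsum, lie_lie, hb, ha, lie_zero, lie_zero, sub_zero]
end
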